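/- Let A be a topological ring, B ⊆ A a dense subring, and M a right A-module which is admissible, i.e. for every m ∈ M the annihilator {a ∈ A : ma = 0} is an open subset of A. If M is simple as a right A-module, then M is simple as a right B-module. -/

import Mathlib

/-! Admissibility makes `{c | m·c = m·a}` an open neighbourhood of `a`, so density gives
`b ∈ B` with `m·b = m·a`. Hence every `B`-stable subgroup is `A`-stable, i.e. an
`A`-submodule, and simplicity over `A` applies. -/

open MulOpposite

section Admissible

variable {A M : Type*} [Ring A] [TopologicalSpace A] [ContinuousSub A]
  [AddCommGroup M] [Module Aᵐᵒᵖ M]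

theorem isOpen_setOf_op_smul_eq {m : M} (hm : IsOpen {a : A | op a • m = 0}) (a : A) :
    IsOpen {c : A | op c • m = op a • m} := by
  have htranslate : {c : A | op c • m = op a • m} = (· - a) ⁻¹' {c | op c • m = 0} := by
    ext c
    simp only [Set.mem_ofPred_eq, Set.mem_preimage, op_sub, sub_smul, sub_eq_zero]
  rw [htranslate]
  exact hm.preimage (continuous_sub_right a)

theorem Dense.exists_mem_op_smul_eq {S : Set A} (hS : Dense S) {m : M}
    (hm : IsOpen {a : A | op a • m = 0}) (a : A) : ∃ s ∈ S, op s • m = op a • m :=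
  hS.exists_mem_open (isOpen_setOf_op_smul_eq hm a) ⟨a, rfl⟩

theorem Dense.smul_mem_of_forall_op_smul_mem {S : Set A} (hS : Dense S)
    (hadm : ∀ m : M, IsOpen {a : A | op a • m = 0}) {N : AddSubgroup M}
    (hN : ∀ s ∈ S, ∀ m ∈ N, op s • m ∈ N) (a : Aᵐᵒᵖ) {m : M} (hm : m ∈ N) : a • m ∈ N := by
  obtain ⟨s, hs, hsa⟩ := hS.exists_mem_op_smul_eq (hadm m) a.unop
  rw [op_unop] at hsa
  exact hsa ▸ hN s hs m hm

end Admissible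

/-- Let `A` be a topological ring, `B ⊆ A` a dense subring, and `M` an
admissible right `A`-module (all annihilators of elements are open). If `M` is
simple over `A` then it is simple over `B`: `M ≠ 0` and every additive
subgroup of `M` stable under the action of `B` is `0` or `M`. -/
theorem simple_over_dense_subring {A : Type*} [Ring A] [TopologicalSpace A]
    [IsTopologicalRing A] (B : Subring A) (hB : Dense (B : Set A))
    {M : Type*} [AddCommGroup M] [Module Aᵐᵒᵖ M]
    (hadm : ∀ m : M, IsOpen {a : A | MulOpposite.op a • m = 0})
    (hsimple : IsSimpleModule Aᵐᵒᵖ M) :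
    Nontrivial M ∧
      ∀ N : AddSubgroup M,
        (∀ b ∈ B, ∀ m ∈ N, MulOpposite.op b • m ∈ N) → N = ⊥ ∨ N = ⊤ := by
  refine ⟨IsSimpleModule.nontrivial Aᵐᵒᵖ M, fun N hN => ?_⟩
  let N' : Submodule Aᵐᵒᵖ M :=
    { N with smul_mem' := fun a _ hm => hB.smul_mem_of_forall_op_smul_mem hadm hN a hm }
  rcases IsSimpleOrder.eq_bot_or_eq_top N' with h | h
  · exact .inl (congrArg Submodule.toAddSubgroup h)
  · exact .inr (congrArg Submodule.toAddSubgroup h)
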